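/- Let A be a group acting by automorphisms on the finite group G. Then G is A-quasisimple if and only if G is nontrivial, G = E(G), and A acts transitively on the set of components of G (for any two components K and L of G there exists a ∈ A with a(K) = L). -/

import Mathlib

open Pointwise

/-- A subgroup `H` of `G` is *subnormal* if there is a finite chain
`H = c 0 ⊴ c 1 ⊴ ⋯ ⊴ c n = G` with each term normal in the next. -/
def IsSubnormal {G : Type*} [Group G] (H : Subgroup G) : Prop :=
  ∃ (n : ℕ) (c : ℕ → Subgroup G), c 0 = H ∧ c n = ⊤ ∧
    ∀ i < n, c i ≤ c (i + 1) ∧ ((c i).subgroupOf (c (i + 1))).Normal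

/-- A group is *quasisimple* if it is perfect and its quotient by its center is simple. -/
def IsQuasisimpleGroup (Q : Type*) [Group Q] : Prop :=
  commutator Q = ⊤ ∧ IsSimpleGroup (Q ⧸ Subgroup.center Q)

/-- A *component* of `G` is a quasisimple subnormal subgroup. -/
def IsComponent {G : Type*} [Group G] (K : Subgroup G) : Prop :=
  IsSubnormal K ∧ IsQuasisimpleGroup ↥K

/-- The *layer* `E(G)`: the subgroup generated by all components of `G`. -/
def layer (G : Type*) [Group G] : Subgroup G :=
  sSup {K : Subgroup G | IsComponent K}

/-- `Sol(G)`: the join of all solvable normal subgroups of `G`. -/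
def solRadical (G : Type*) [Group G] : Subgroup G :=
  sSup {N : Subgroup G | N.Normal ∧ IsSolvable ↥N}

instance solRadical_normal (G : Type*) [Group G] : (solRadical G).Normal := by
  constructor
  intro n hn g
  have h : solRadical G ≤ (solRadical G).comap (MulAut.conj g).toMonoidHom := by
    apply sSup_le
    intro N hN x hx
    have hmem : g * x * g⁻¹ ∈ N := hN.1.conj_mem x hx g
    exact Subgroup.mem_comap.mpr
      (le_sSup hN (by simpa [MulAut.conj_apply] using hmem))
  simpa [MulAut.conj_apply] using h hn

/-- A *sol-component* of `G` is a perfect subnormal subgroup of `G` whose image in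
`G/Sol(G)` is a component of `G/Sol(G)`. -/
def IsSolComponent {G : Type*} [Group G] (K : Subgroup G) : Prop :=
  IsSubnormal K ∧ commutator ↥K = ⊤ ∧
    IsComponent (K.map (QuotientGroup.mk' (solRadical G)))

/-- `E_sol(G)`: the subgroup generated by all sol-components of `G`. -/
def solLayer (G : Type*) [Group G] : Subgroup G :=
  sSup {K : Subgroup G | IsSolComponent K}

/-- `G` is *`A`-simple* (with `A` acting via `φ : A →* MulAut G`) if `G` is nonabelian
and the only `A`-invariant normal subgroups of `G` are `1` and `G`. -/
def IsMulASimple {A G : Type*} [Group A] [Group G] (φ : A →* MulAut G) : Prop :=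
  (¬ ∀ x y : G, Commute x y) ∧
    ∀ N : Subgroup G, N.Normal → (∀ a : A, φ a • N = N) → N = ⊥ ∨ N = ⊤

/-- The homomorphism `MulAut G →* MulAut (G ⧸ Z(G))` induced by passing to the
quotient by the center (which is characteristic). -/
def centerQuotHom (G : Type*) [Group G] :
    MulAut G →* MulAut (G ⧸ Subgroup.center G) where
  toFun e := QuotientGroup.congr (Subgroup.center G) (Subgroup.center G) e
      (Subgroup.characteristic_iff_map_eq.mp inferInstance e)
  map_one' := by
    ext x
    induction x using QuotientGroup.induction_on with
    | H x => rfl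
  map_mul' e f := by
    ext x
    induction x using QuotientGroup.induction_on with
    | H x => rfl

/-- `G` is *`A`-quasisimple* (with `A` acting via `φ`) if `G` is perfect and
`G/Z(G)` is `A`-simple with respect to the induced action. -/
def IsAQuasisimple {A G : Type*} [Group A] [Group G] (φ : A →* MulAut G) : Prop :=
  commutator G = ⊤ ∧ IsMulASimple ((centerQuotHom G).comp φ)

/-!
A component `K` of a group contains or centralizes every normal subgroup: climbing a
subnormal series `K ⊴ ⋯ ⊴ G`, the three subgroups lemma and `K = ⁅K, K⁆` carry this property
from each term to the next. Hence distinct components commute.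

If `G` is `A`-quasisimple, the solvable radical is `A`-invariant, so it is central, and with it
every solvable subnormal subgroup; a minimal non-central subnormal subgroup is then a component.
The layer, and the join of the `A`-orbit of a component, are `A`-invariant normal non-central
subgroups, so both are `G`; a component outside the orbit would commute with all of `G`.
Conversely, an `A`-invariant normal non-central subgroup must contain some component, hence by
transitivity all of them, hence `E(G) = G`.
-/

open Subgroup

section Subnormal

variable {G : Type*} [Group G]

theorem isSubnormal_iff_subgroup_isSubnormal {H : Subgroup G} :
    _root_.IsSubnormal H ↔ H.IsSubnormal := by
  constructor
  · rintro ⟨n, c, rfl, hn, hc⟩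
    induction n generalizing c with
    | zero => exact hn ▸ .top
    | succ n ih =>
      exact .step _ _ (hc 0 n.succ_pos).1
        (ih (fun i => c (i + 1)) hn fun i hi => hc (i + 1) (by omega)) (hc 0 n.succ_pos).2
  · intro h
    induction h with
    | top => exact ⟨0, fun _ => ⊤, rfl, rfl, by simp⟩
    | step H K hHK _ hHnK ih =>
      obtain ⟨n, c, rfl, hcn, hc⟩ := ih
      refine ⟨n + 1, fun i => Nat.casesOn i H c, rfl, hcn, ?_⟩
      rintro (_ | i) hi
      · exact ⟨hHK, hHnK⟩
      · exact hc i (by omega)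

end Subnormal

section Quasisimple

variable {Q : Type*} [Group Q]

theorem eq_top_of_sup_center_eq_top (hQ : commutator Q = ⊤) {H : Subgroup Q}
    (h : H ⊔ center Q = ⊤) : H = ⊤ := by
  have : H.Normal := normalizer_eq_top_iff.mp <|
    top_le_iff.mp (h ▸ sup_le le_normalizer (center_le_normalizer _))
  exact top_le_iff.mp (hQ ▸ Normal.commutator_le_of_self_sup_commutative_eq_top h inferInstance)

theorem sup_center_eq_top_of_map_mk_eq_top {H : Subgroup Q}
    (h : H.map (QuotientGroup.mk' (center Q)) = ⊤) : H ⊔ center Q = ⊤ := by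
  rw [← QuotientGroup.ker_mk' (center Q), ← comap_map_eq, h, comap_top]

theorem isSolvable_of_commutator_le_center (h : commutator Q ≤ center Q) :
    Group.IsSolvable Q :=
  ⟨2, le_bot_iff.mp <| (commutator_mono h le_rfl).trans (commutator_center_left _).le⟩

theorem isQuasisimpleGroup_iff : IsQuasisimpleGroup Q ↔
    ¬ Group.IsSolvable Q ∧ ∀ V : Subgroup Q, V.Normal → V ≤ center Q ∨ V = ⊤ := by
  constructor
  · rintro ⟨hperf, hsimple⟩
    refine ⟨fun _ => ?_, fun V hV => ?_⟩
    · have : Nontrivial Q := (QuotientGroup.mk'_surjective (center Q)).nontrivial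
      exact (Group.IsSolvable.commutator_lt_top_of_nontrivial Q).ne hperf
    · rcases hsimple.eq_bot_or_eq_top_of_normal _ (hV.map _ (QuotientGroup.mk'_surjective _))
        with h | h
      · rw [Subgroup.map_eq_bot_iff, QuotientGroup.ker_mk'] at h
        exact .inl h
      · exact .inr (eq_top_of_sup_center_eq_top hperf (sup_center_eq_top_of_map_mk_eq_top h))
  · rintro ⟨hns, hV⟩
    have hZ : ¬ commutator Q ≤ center Q := fun h => hns (isSolvable_of_commutator_le_center h)
    refine ⟨(hV _ inferInstance).resolve_left hZ, ?_⟩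
    have : Nontrivial (Q ⧸ center Q) :=
      QuotientGroup.nontrivial_iff.mpr fun h => hZ (h ▸ le_top)
    refine ⟨fun W hW => ?_⟩
    rw [← map_comap_eq_self_of_surjective (QuotientGroup.mk'_surjective (center Q)) W]
    rcases hV _ (hW.comap _) with h | h
    · exact .inl ((Subgroup.map_eq_bot_iff _).mpr (by rwa [QuotientGroup.ker_mk']))
    · exact .inr (h ▸ map_top_of_surjective _ (QuotientGroup.mk'_surjective _))

theorem IsQuasisimpleGroup.not_isSolvable (h : IsQuasisimpleGroup Q) : ¬ Group.IsSolvable Q :=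
  (isQuasisimpleGroup_iff.mp h).1

theorem IsQuasisimpleGroup.le_center_or_eq_top (h : IsQuasisimpleGroup Q) {V : Subgroup Q}
    (hV : V.Normal) : V ≤ center Q ∨ V = ⊤ :=
  (isQuasisimpleGroup_iff.mp h).2 V hV

theorem IsQuasisimpleGroup.of_mulEquiv {Q' : Type*} [Group Q'] (e : Q ≃* Q')
    (h : IsQuasisimpleGroup Q) : IsQuasisimpleGroup Q' := by
  refine isQuasisimpleGroup_iff.mpr ⟨fun _ => h.not_isSolvable
    (Group.isSolvable_of_surjective (f := e.symm.toMonoidHom) e.symm.surjective), fun V hV => ?_⟩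
  rcases h.le_center_or_eq_top (hV.comap e.toMonoidHom) with hc | ht
  · refine .inl fun v hv => ?_
    have hv' := mem_center_iff.mp (hc (show e.symm v ∈ V.comap e.toMonoidHom by simpa))
    exact mem_center_iff.mpr fun g => by simpa using congrArg e (hv' (e.symm g))
  · refine .inr ?_
    rw [← map_comap_eq_self_of_surjective (f := e.toMonoidHom) e.surjective V, ht,
      map_top_of_surjective _ e.surjective]

variable {G : Type*} [Group G] {K : Subgroup G}

theorem IsQuasisimpleGroup.not_le_centralizer (h : IsQuasisimpleGroup K) :
    ¬ K ≤ centralizer K := fun hK =>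
  h.not_isSolvable <| Group.isSolvable_of_comm fun a b =>
    Subtype.ext (mem_centralizer_iff.mp (hK b.2) a a.2)

theorem IsQuasisimpleGroup.commutator_eq_self (h : IsQuasisimpleGroup K) : ⁅K, K⁆ = K := by
  rw [← map_subtype_commutator, h.1, ← MonoidHom.range_eq_map, range_subtype]

end Quasisimple

section Components

variable {G : Type*} [Group G]

theorem isComponent_iff {K : Subgroup G} :
    IsComponent K ↔ K.IsSubnormal ∧ IsQuasisimpleGroup K := by
  rw [IsComponent, isSubnormal_iff_subgroup_isSubnormal]

theorem IsQuasisimpleGroup.le_or_le_centralizer_of_le {K N : Subgroup G}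
    (hK : IsQuasisimpleGroup K) (hNK : N ≤ K) (hKN : K ≤ normalizer N) :
    K ≤ N ∨ K ≤ centralizer N := by
  rcases hK.le_center_or_eq_top ((normal_subgroupOf_iff_le_normalizer hNK).mpr hKN) with h | h
  · refine .inr fun k hk => mem_centralizer_iff.mpr fun n hn => ?_
    exact congrArg Subtype.val
      (mem_center_iff.mp (h (show ⟨n, hNK hn⟩ ∈ N.subgroupOf K from hn)) ⟨k, hk⟩).symm
  · exact .inl (subgroupOf_eq_top.mp h)

theorem le_or_le_centralizer_of_normalizer_of_forall {K M H N : Subgroup G} (hK : ⁅K, K⁆ = K)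
    (hKM : K ≤ M) (hMH : M ≤ H) (hHM : H ≤ normalizer M)
    (hM : ∀ N ≤ M, M ≤ normalizer N → K ≤ N ∨ K ≤ centralizer N)
    (hNH : N ≤ H) (hHN : H ≤ normalizer N) : K ≤ N ∨ K ≤ centralizer N := by
  rcases hM (M ⊓ N) inf_le_left
    ((le_inf le_normalizer (hMH.trans hHN)).trans inf_normalizer_le_normalizer_inf) with h | h
  · exact .inl (h.trans inf_le_right)
  · have hKN : ⁅K, N⁆ ≤ M ⊓ N :=
      le_inf ((commutator_mono hKM le_rfl).trans
          (le_normalizer_iff_commutator_le_left.mp (hNH.trans hHM)))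
        (le_normalizer_iff_commutator_le_right.mp (hKM.trans (hMH.trans hHN)))
    have h1 : ⁅⁅K, N⁆, K⁆ = ⊥ :=
      commutator_eq_bot_iff_le_centralizer.mpr (hKN.trans (le_centralizer_iff.mp h))
    have h2 : ⁅⁅N, K⁆, K⁆ = ⊥ := by rwa [commutator_comm N K]
    have := commutator_commutator_eq_bot_of_rotate h1 h2
    rw [hK, commutator_eq_bot_iff_le_centralizer] at this
    exact .inr this

theorem IsQuasisimpleGroup.le_or_le_centralizer_of_normal {K N : Subgroup G}
    (hKs : K.IsSubnormal) (hK : IsQuasisimpleGroup K) (hN : N.Normal) :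
    K ≤ N ∨ K ≤ centralizer N := by
  suffices ∀ X : Subgroup G, X.IsSubnormal → K ≤ X →
      (∀ N ≤ X, X ≤ normalizer N → K ≤ N ∨ K ≤ centralizer N) →
      K ≤ N ∨ K ≤ centralizer N from
    this K hKs le_rfl fun _ => hK.le_or_le_centralizer_of_le
  intro X hX
  induction hX with
  | top => exact fun _ h => h N le_top (normalizer_eq_top_iff.mpr hN).ge
  | step X Y hXY _ hXnY ih =>
    exact fun hKX hX => ih (hKX.trans hXY) fun N hNY hYN =>
      le_or_le_centralizer_of_normalizer_of_forall hK.commutator_eq_self hKX hXY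
        ((normal_subgroupOf_iff_le_normalizer hXY).mp hXnY) hX hNY hYN

theorem IsQuasisimpleGroup.le_or_le_centralizer_of_isSubnormal {K L : Subgroup G}
    (hKs : K.IsSubnormal) (hK : IsQuasisimpleGroup K) (hL : L.IsSubnormal) :
    K ≤ L ∨ K ≤ centralizer L := by
  induction hL with
  | top => exact .inl le_top
  | step L M hLM _ hLnM ih =>
    rcases ih with hKM | hKM
    · have hK' : IsQuasisimpleGroup (K.subgroupOf M) :=
        hK.of_mulEquiv (subgroupOfEquivOfLe hKM).symm
      rcases hK'.le_or_le_centralizer_of_normal hKs.subgroupOf hLnM with h | h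
      · exact .inl fun k hk => h (show ⟨k, hKM hk⟩ ∈ K.subgroupOf M from hk)
      · refine .inr fun k hk => mem_centralizer_iff.mpr fun l hl => ?_
        exact congrArg Subtype.val (mem_centralizer_iff.mp
          (h (show ⟨k, hKM hk⟩ ∈ K.subgroupOf M from hk)) ⟨l, hLM hl⟩ hl)
    · exact .inr (hKM.trans (centralizer_le hLM))

theorem IsComponent.le_centralizer_of_ne {K L : Subgroup G} (hK : IsComponent K)
    (hL : IsComponent L) (hne : K ≠ L) : K ≤ centralizer L := by
  rw [isComponent_iff] at hK hL
  rcases hK.2.le_or_le_centralizer_of_isSubnormal hK.1 hL.1 with h | h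
  · rcases hL.2.le_or_le_centralizer_of_isSubnormal hL.1 hK.1 with h' | h'
    · exact absurd (le_antisymm h h') hne
    · exact le_centralizer_iff.mp h'
  · exact h

end Components

section Characteristic

variable {G : Type*} [Group G]

theorem characteristic_sSup {S : Set (Subgroup G)}
    (hS : ∀ ϕ : G ≃* G, ∀ H ∈ S, H.map ϕ.toMonoidHom ∈ S) : (sSup S).Characteristic :=
  characteristic_iff_le_comap.mpr fun ϕ =>
    sSup_le fun H hH => map_le_iff_le_comap.mp (le_sSup (hS ϕ H hH))

theorem smul_eq_self_of_characteristic (H : Subgroup G) [hH : H.Characteristic] (e : MulAut G) :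
    e • H = H :=
  characteristic_iff_map_eq.mp hH e

theorem IsComponent.map_mulEquiv {K : Subgroup G} (hK : IsComponent K) (ϕ : G ≃* G) :
    IsComponent (K.map ϕ.toMonoidHom) := by
  rw [isComponent_iff] at hK ⊢
  exact ⟨hK.1.map ϕ.surjective, hK.2.of_mulEquiv (ϕ.subgroupMap K)⟩

theorem IsComponent.smul {K : Subgroup G} (hK : IsComponent K) (e : MulAut G) :
    IsComponent (e • K) :=
  hK.map_mulEquiv e

instance layer_characteristic : (layer G).Characteristic :=
  characteristic_sSup fun ϕ _ hK => hK.map_mulEquiv ϕ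

end Characteristic

section SolvableRadical

variable {G : Type*} [Group G]

theorem isSolvable_sup_of_le_normalizer {H N : Subgroup G} (hH : Group.IsSolvable H)
    (hN : Group.IsSolvable N) (hHN : H ≤ normalizer N) : Group.IsSolvable ↥(H ⊔ N) := by
  have := normal_subgroupOf_of_le_normalizer hHN
  have := normal_subgroupOf_sup_of_le_normalizer hHN
  refine (Group.isSolvable_iff_subgroup_quotient (N.subgroupOf (H ⊔ N))).mpr ⟨?_, ?_⟩
  · exact Group.isSolvable_of_surjective
      (f := (subgroupOfEquivOfLe le_sup_right).symm.toMonoidHom) (MulEquiv.surjective _)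
  · exact Group.isSolvable_of_surjective
      (f := (QuotientGroup.quotientInfEquivProdNormalizerQuotient H N hHN).toMonoidHom)
      (MulEquiv.surjective _)

/-- For finite `G`, `relSolRadical ⊤` is `solRadical G`. -/
def relSolRadical (X : Subgroup G) : Subgroup G :=
  sSup {D | D ≤ X ∧ X ≤ normalizer D ∧ Group.IsSolvable D}

theorem le_relSolRadical {D X : Subgroup G} (hDX : D ≤ X) (hXD : X ≤ normalizer D)
    (hD : Group.IsSolvable D) : D ≤ relSolRadical X :=
  le_sSup ⟨hDX, hXD, hD⟩

theorem relSolRadical_mem [Finite G] (X : Subgroup G) :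
    relSolRadical X ∈ {D | D ≤ X ∧ X ≤ normalizer D ∧ Group.IsSolvable D} := by
  refine SupClosed.sSup_mem ?_ (Set.toFinite _) ⟨bot_le, le_normalizer_of_normal, inferInstance⟩
    subset_rfl
  rintro D₁ ⟨h₁X, hX₁, h₁⟩ D₂ ⟨h₂X, hX₂, h₂⟩
  exact ⟨sup_le h₁X h₂X, (le_inf hX₁ hX₂).trans (normalizer_inf_normalizer_le_normalizer_sup _ _),
    isSolvable_sup_of_le_normalizer h₁ h₂ (h₁X.trans hX₂)⟩

theorem map_relSolRadical [Finite G] {X : Subgroup G} (ϕ : G ≃* G)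
    (hX : X.map ϕ.toMonoidHom = X) : (relSolRadical X).map ϕ.toMonoidHom = relSolRadical X := by
  obtain ⟨hRX, hXR, hR⟩ := relSolRadical_mem X
  have hle : (relSolRadical X).map ϕ.toMonoidHom ≤ relSolRadical X :=
    le_relSolRadical ((map_mono hRX).trans hX.le)
      (hX.ge.trans ((map_mono hXR).trans (le_normalizer_map _)))
      (Group.isSolvable_of_surjective (ϕ.toMonoidHom.subgroupMap_surjective _))
  exact eq_of_le_of_card_ge hle (card_map_of_injective ϕ.injective).ge

theorem normalizer_le_normalizer_relSolRadical [Finite G] (X : Subgroup G) :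
    normalizer (X : Set G) ≤ normalizer (relSolRadical X : Set G) := fun g hg =>
  mem_normalizer_iff_map_conj_eq.mpr
    (map_relSolRadical (MulAut.conj g) (mem_normalizer_iff_map_conj_eq.mp hg))

instance relSolRadical_top_characteristic [Finite G] :
    (relSolRadical (⊤ : Subgroup G)).Characteristic :=
  characteristic_iff_map_eq.mpr fun ϕ =>
    map_relSolRadical ϕ (map_top_of_surjective _ ϕ.surjective)

theorem Subgroup.IsSubnormal.relSolRadical_le [Finite G] {X : Subgroup G} (hX : X.IsSubnormal) :
    relSolRadical X ≤ relSolRadical ⊤ := by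
  induction hX with
  | top => exact le_rfl
  | step X Y hXY _ hXnY ih =>
    obtain ⟨hRX, -, hR⟩ := relSolRadical_mem X
    exact (le_relSolRadical (hRX.trans hXY) (((normal_subgroupOf_iff_le_normalizer hXY).mp
      hXnY).trans (normalizer_le_normalizer_relSolRadical X)) hR).trans ih

theorem Subgroup.IsSubnormal.le_relSolRadical_top [Finite G] {D : Subgroup G}
    (hD : D.IsSubnormal) (hs : Group.IsSolvable D) : D ≤ relSolRadical ⊤ :=
  (le_relSolRadical le_rfl le_normalizer hs).trans hD.relSolRadical_le

end SolvableRadical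

section Layer

variable {G : Type*} [Group G]

theorem IsComponent.not_le_center {K : Subgroup G} (hK : IsComponent K) : ¬ K ≤ center G :=
  fun h => (isComponent_iff.mp hK).2.not_le_centralizer (h.trans (center_le_centralizer _))

theorem IsComponent.le_layer {K : Subgroup G} (hK : IsComponent K) : K ≤ layer G :=
  le_sSup hK

theorem IsComponent.le_commutator {K : Subgroup G} (hK : IsComponent K) : K ≤ commutator G := by
  rw [← (isComponent_iff.mp hK).2.commutator_eq_self]
  exact commutator_mono le_top le_top

theorem exists_isComponent_le [Finite G]
    (hsol : ∀ D : Subgroup G, D.IsSubnormal → Group.IsSolvable D → D ≤ center G)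
    {H : Subgroup G} (hH : H.IsSubnormal) (hHZ : ¬ H ≤ center G) : ∃ K ≤ H, IsComponent K := by
  obtain ⟨K, hKH, hmin⟩ := exists_minimal_le_of_wellFoundedLT
    (fun K : Subgroup G => K.IsSubnormal ∧ ¬ K ≤ center G) H ⟨hH, hHZ⟩
  obtain ⟨hKs, hKZ⟩ := hmin.prop
  refine ⟨K, hKH, isComponent_iff.mpr ⟨hKs, isQuasisimpleGroup_iff.mpr
    ⟨fun hs => hKZ (hsol K hKs hs), fun V hV => or_iff_not_imp_right.mpr fun hVtop => ?_⟩⟩⟩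
  have hVZ : V.map K.subtype ≤ center G := by
    by_contra hVZ
    refine hVtop (eq_top_iff.mpr fun v _ => ?_)
    obtain ⟨w, hw, hwv⟩ :=
      hmin.le_of_le ⟨hV.isSubnormal.trans' hKs, hVZ⟩ (map_subtype_le V) v.2
    exact Subtype.ext hwv ▸ hw
  exact fun v hv =>
    mem_center_iff.mpr fun k => Subtype.ext (mem_center_iff.mp (hVZ ⟨v, hv, rfl⟩) k)

theorem exists_isComponent_of_layer_eq_top [Nontrivial G] (h : layer G = ⊤) :
    ∃ K : Subgroup G, IsComponent K := by
  by_contra! hK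
  have hbot : layer G = ⊥ := sSup_eq_bot.mpr fun K hK' => absurd hK' (hK K)
  exact bot_ne_top (hbot.symm.trans h)

theorem commutator_eq_top_of_layer_eq_top (h : layer G = ⊤) : commutator G = ⊤ :=
  top_le_iff.mp (h ▸ sSup_le fun _ hK => hK.le_commutator)

theorem IsComponent.normal_of_layer_eq_top {K : Subgroup G} (hK : IsComponent K)
    (h : layer G = ⊤) : K.Normal := by
  refine normalizer_eq_top_iff.mp (top_le_iff.mp (h ▸ sSup_le fun L hL => ?_))
  rcases eq_or_ne L K with rfl | hne
  · exact le_normalizer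
  · exact (hL.le_centralizer_of_ne hK hne).trans (centralizer_le_normalizer _)

theorem IsComponent.exists_eq_of_le_iSup {L : Subgroup G} (hL : IsComponent L) {ι : Type*}
    {K : ι → Subgroup G} (hK : ∀ i, IsComponent (K i)) (hLK : L ≤ ⨆ i, K i) :
    ∃ i, K i = L := by
  by_contra! hne
  exact (isComponent_iff.mp hL).2.not_le_centralizer
    (hLK.trans (iSup_le fun i => (hK i).le_centralizer_of_ne hL (hne i)))

end Layer

section AQuasisimple

variable {A G : Type*} [Group A] [Group G]

theorem centerQuotHom_smul_map_mk (e : MulAut G) (H : Subgroup G) :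
    centerQuotHom G e • H.map (QuotientGroup.mk' (center G)) =
      (e • H).map (QuotientGroup.mk' (center G)) := by
  change map (centerQuotHom G e).toMonoidHom (map _ H) = map _ (map e.toMonoidHom H)
  rw [map_map, map_map]
  rfl

theorem smul_comap_mk_center (e : MulAut G) (W : Subgroup (G ⧸ center G)) :
    e • W.comap (QuotientGroup.mk' (center G)) =
      (centerQuotHom G e • W).comap (QuotientGroup.mk' (center G)) := by
  ext x
  simp only [mem_pointwise_smul_iff_inv_smul_mem, mem_comap, ← map_inv]
  rfl

theorem isAQuasisimple_iff (φ : A →* MulAut G) : IsAQuasisimple φ ↔ commutator G = ⊤ ∧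
    center G ≠ ⊤ ∧ ∀ N : Subgroup G, N.Normal → (∀ a, φ a • N = N) → N ≤ center G ∨ N = ⊤ := by
  have hmk := QuotientGroup.mk'_surjective (center G)
  refine and_congr_right fun hperf =>
    and_congr (not_congr ?_) ⟨fun h N hN hNA => ?_, fun h W hW hWA => ?_⟩
  · rw [← top_le_iff, ← hperf, ← Normal.quotient_commutative_iff_commutator_le]
    exact ⟨fun h => ⟨⟨h⟩⟩, fun h x y => h.is_comm.comm x y⟩
  · rcases h _ (hN.map _ hmk) (fun a => (centerQuotHom_smul_map_mk _ N).trans (by rw [hNA a]))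
      with hW | hW
    · rw [Subgroup.map_eq_bot_iff, QuotientGroup.ker_mk'] at hW
      exact .inl hW
    · exact .inr (eq_top_of_sup_center_eq_top hperf (sup_center_eq_top_of_map_mk_eq_top hW))
  · rw [← map_comap_eq_self_of_surjective hmk W]
    rcases h _ (hW.comap _) (fun a => (smul_comap_mk_center _ W).trans (congrArg _ (hWA a)))
      with hN | hN
    · exact .inl ((Subgroup.map_eq_bot_iff _).mpr (by rwa [QuotientGroup.ker_mk']))
    · exact .inr (hN ▸ map_top_of_surjective _ hmk)

theorem le_center_of_isSubnormal_of_isSolvable [Finite G] [Nontrivial G]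
    (φ : A →* MulAut G) (hperf : commutator G = ⊤)
    (hsimple : ∀ N : Subgroup G, N.Normal → (∀ a, φ a • N = N) → N ≤ center G ∨ N = ⊤)
    {D : Subgroup G} (hD : D.IsSubnormal) (hs : Group.IsSolvable D) : D ≤ center G := by
  refine (hD.le_relSolRadical_top hs).trans ((hsimple _ inferInstance
    fun a => smul_eq_self_of_characteristic _ _).resolve_right fun htop => ?_)
  obtain ⟨-, -, hR⟩ := relSolRadical_mem (⊤ : Subgroup G)
  rw [htop] at hR
  have := Group.isSolvable_of_surjective (f := (topEquiv : (⊤ : Subgroup G) ≃* G).toMonoidHom)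
    (MulEquiv.surjective _)
  exact (Group.IsSolvable.commutator_lt_top_of_nontrivial G).ne hperf

theorem iSup_smul_eq_top_of_isComponent (φ : A →* MulAut G)
    (hsimple : ∀ N : Subgroup G, N.Normal → (∀ a, φ a • N = N) → N ≤ center G ∨ N = ⊤)
    (hE : layer G = ⊤) {K : Subgroup G} (hK : IsComponent K) : ⨆ a, φ a • K = ⊤ := by
  have := fun a => (hK.smul (φ a)).normal_of_layer_eq_top hE
  refine (hsimple _ (iSup_normal _) fun b => ?_).resolve_left fun h =>
    hK.not_le_center (le_trans ?_ h)
  · calc φ b • ⨆ a, φ a • K = ⨆ a, φ b • φ a • K := map_iSup _ _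
      _ = ⨆ a, φ (b * a) • K := by simp only [smul_smul, map_mul]
      _ = ⨆ a, φ a • K := (Equiv.mulLeft b).iSup_comp (g := fun a => φ a • K)
  · exact le_iSup_of_le 1 (by rw [map_one, one_smul])

theorem le_center_or_eq_top_of_transitive (φ : A →* MulAut G) (hE : layer G = ⊤)
    (htrans : ∀ K L : Subgroup G, IsComponent K → IsComponent L → ∃ a : A, φ a • K = L)
    {N : Subgroup G} (hN : N.Normal) (hNA : ∀ a, φ a • N = N) : N ≤ center G ∨ N = ⊤ := by
  by_cases hKN : ∃ K, IsComponent K ∧ K ≤ N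
  · obtain ⟨K, hK, hKN⟩ := hKN
    refine .inr (top_le_iff.mp (hE ▸ sSup_le fun L hL => ?_))
    obtain ⟨a, rfl⟩ := htrans K L hK hL
    exact hNA a ▸ pointwise_smul_le_pointwise_smul_iff.mpr hKN
  · refine .inl (centralizer_eq_top_iff_subset.mp (top_le_iff.mp (hE ▸ sSup_le fun L hL => ?_)))
    have hL' := isComponent_iff.mp hL
    exact (hL'.2.le_or_le_centralizer_of_normal hL'.1 hN).resolve_left fun h => hKN ⟨L, hL, h⟩

end AQuasisimple

/-- `G` is `A`-quasisimple iff `G` is nontrivial, `G = E(G)`, and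
`A` acts transitively on the set of components of `G`. -/
theorem isAQuasisimple_iff_layer_eq_top_and_transitive
    {A G : Type*} [Group A] [Group G] [Finite G] (φ : A →* MulAut G) :
    IsAQuasisimple φ ↔
      Nontrivial G ∧ layer G = ⊤ ∧
        ∀ K L : Subgroup G, IsComponent K → IsComponent L → ∃ a : A, φ a • K = L := by
  rw [isAQuasisimple_iff]
  constructor
  · rintro ⟨hperf, hZ, hsimple⟩
    have : Nontrivial G := (subsingleton_or_nontrivial G).resolve_left fun _ =>
      hZ (Subsingleton.elim _ _)
    obtain ⟨K₀, -, hK₀⟩ := exists_isComponent_le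
      (fun _ hD hs => le_center_of_isSubnormal_of_isSolvable φ hperf hsimple hD hs) .top
      fun h => hZ (top_le_iff.mp h)
    have hE : layer G = ⊤ :=
      (hsimple _ inferInstance fun _ => smul_eq_self_of_characteristic _ _).resolve_left
        fun h => hK₀.not_le_center (hK₀.le_layer.trans h)
    refine ⟨inferInstance, hE, fun K L hK hL => ?_⟩
    exact hL.exists_eq_of_le_iSup (fun a => hK.smul (φ a))
      (iSup_smul_eq_top_of_isComponent φ hsimple hE hK ▸ le_top)
  · rintro ⟨_, hE, htrans⟩
    obtain ⟨K₀, hK₀⟩ := exists_isComponent_of_layer_eq_top hE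
    refine ⟨commutator_eq_top_of_layer_eq_top hE, fun hZ => hK₀.not_le_center (hZ ▸ le_top),
      fun _ => le_center_or_eq_top_of_transitive φ hE htrans⟩
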